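/- arXiv:math/0202124 — 4 statements merged into one kernel-verified Lean document; each statement's English description precedes it below -/
import Mathlib

section
/- Folding an NFA does not change the set of free-group reductions of the accepted language: if N' is obtained from an NFA N over alphabet A ∪ A⁻¹ by identifying two states v₁, v₃ that both receive an edge labeled a from the same state v₂ (or both emit an edge labeled a to the same state v₂), then red(L(N')) = red(L(N)). -/
/-- The map identifying state `v₃` with state `v₁`. -/
def foldMap {σ : Type*} [DecidableEq σ] (v₁ v₃ : σ) : σ → σ := fun s => if s = v₃ then v₁ else s

/-- The NFA obtained from `N` by one folding step: the states `v₁` and `v₃` are merged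
(identified via `foldMap v₁ v₃`), the two folded edges are merged into one, and all other
edges incident to `v₁` or `v₃` are transferred to the merged state. -/
def foldNFA {α σ : Type*} [DecidableEq σ] (N : NFA α σ) (v₁ v₃ : σ) : NFA α σ where
  step s x := {t | ∃ p q, q ∈ N.step p x ∧ foldMap v₁ v₃ p = s ∧ foldMap v₁ v₃ q = t}
  start := foldMap v₁ v₃ '' N.start
  accept := foldMap v₁ v₃ '' N.accept

/-- Paths in an NFA. -/
inductive NPath {α σ : Type*} (N : NFA α σ) : σ → List α → σ → Prop
  | nil (p : σ) : NPath N p [] p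
  | cons {p q r : σ} {a : α} {w : List α} (h : q ∈ N.step p a) (hw : NPath N q w r) :
      NPath N p (a :: w) r

theorem NPath.append {α σ : Type*} {N : NFA α σ} {p q r : σ} {w₁ w₂ : List α}
    (h₁ : NPath N p w₁ q) (h₂ : NPath N q w₂ r) : NPath N p (w₁ ++ w₂) r := by
  induction h₁ with
  | nil => exact h₂
  | cons h _ ih => exact NPath.cons h (ih h₂)

theorem mem_evalFrom_iff {α σ : Type*} {N : NFA α σ} {S : Set σ} {w : List α} {q : σ} :
    q ∈ N.evalFrom S w ↔ ∃ p ∈ S, NPath N p w q := by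
  induction w generalizing S with
  | nil =>
    simp only [NFA.evalFrom_nil]
    constructor
    · exact fun h => ⟨q, h, NPath.nil q⟩
    · rintro ⟨p, hp, h⟩; cases h; exact hp
  | cons a w ih =>
    constructor
    · intro h
      have : q ∈ N.evalFrom (N.stepSet S a) w := h
      obtain ⟨p, hp, hpath⟩ := ih.mp this
      rw [NFA.mem_stepSet] at hp
      obtain ⟨t, ht, hstep⟩ := hp
      exact ⟨t, ht, NPath.cons hstep hpath⟩
    · rintro ⟨p, hp, hpath⟩
      cases hpath with
      | cons hstep hw =>
        refine ih.mpr ⟨_, ?_, hw⟩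
        rw [NFA.mem_stepSet]
        exact ⟨p, hp, hstep⟩

theorem mem_accepts_iff {α σ : Type*} {N : NFA α σ} {w : List α} :
    w ∈ N.accepts ↔ ∃ p ∈ N.start, ∃ q ∈ N.accept, NPath N p w q := by
  rw [NFA.mem_accepts]
  constructor
  · rintro ⟨t, ht, h⟩
    obtain ⟨p, hp, hpath⟩ := mem_evalFrom_iff.mp h
    exact ⟨p, hp, t, ht, hpath⟩
  · rintro ⟨p, hp, t, ht, hpath⟩
    exact ⟨t, ht, mem_evalFrom_iff.mpr ⟨p, hp, hpath⟩⟩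

section Connect

variable {α σ : Type*} [DecidableEq σ] (N : NFA (α × Bool) σ)

/-- Connecting lemma: any two states identified by the fold are joined in `N` by a word
that freely reduces to the empty word. -/
theorem connect (hsym : ∀ p q a b, q ∈ N.step p (a, b) → p ∈ N.step q (a, !b))
    (v₁ v₃ : σ)
    (hfold : (∃ v₂ a, v₁ ∈ N.step v₂ a ∧ v₃ ∈ N.step v₂ a) ∨
             (∃ v₂ a, v₂ ∈ N.step v₁ a ∧ v₂ ∈ N.step v₃ a))
    (p p' : σ) (h : foldMap v₁ v₃ p = foldMap v₁ v₃ p') :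
    ∃ u, NPath N p u p' ∧ FreeGroup.Red u [] := by
  by_cases hpp : p = p'
  · subst hpp; exact ⟨[], NPath.nil p, FreeGroup.Red.refl⟩
  · -- p ≠ p', so {p, p'} = {v₁, v₃}
    unfold foldMap at h
    have key : ∀ x y : σ, x ≠ y → (if x = v₃ then v₁ else x) = (if y = v₃ then v₁ else y) →
        (x = v₁ ∧ y = v₃) ∨ (x = v₃ ∧ y = v₁) := by
      intro x y hxy hxy'
      by_cases hx : x = v₃ <;> by_cases hy : y = v₃ <;> simp_all
    have hred : ∀ (a : α × Bool), FreeGroup.Red [(a.1, !a.2), (a.1, a.2)] [] := by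
      intro a
      have : FreeGroup.Red.Step ([] ++ (a.1, !a.2) :: (a.1, !!a.2) :: []) ([] ++ []) :=
        FreeGroup.Red.Step.not
      have h2 := Relation.ReflTransGen.single this; simp at h2; exact h2
    have hred' : ∀ (a : α × Bool), FreeGroup.Red [(a.1, a.2), (a.1, !a.2)] [] := by
      intro a
      have : FreeGroup.Red.Step ([] ++ (a.1, a.2) :: (a.1, !a.2) :: []) ([] ++ []) :=
        FreeGroup.Red.Step.not
      have h2 := Relation.ReflTransGen.single this; simp at h2; exact h2
    -- build path from v₁ to v₃ and from v₃ to v₁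
    have main : (∃ u, NPath N v₁ u v₃ ∧ FreeGroup.Red u []) ∧
        (∃ u, NPath N v₃ u v₁ ∧ FreeGroup.Red u []) := by
      rcases hfold with ⟨v₂, a, h₁, h₃⟩ | ⟨v₂, a, h₁, h₃⟩
      · refine ⟨⟨[(a.1, !a.2), (a.1, a.2)], ?_, hred a⟩,
               ⟨[(a.1, !a.2), (a.1, a.2)], ?_, hred a⟩⟩
        · exact NPath.cons (hsym _ _ _ _ h₁) (NPath.cons h₃ (NPath.nil _))
        · exact NPath.cons (hsym _ _ _ _ h₃) (NPath.cons h₁ (NPath.nil _))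
      · refine ⟨⟨[(a.1, a.2), (a.1, !a.2)], ?_, hred' a⟩,
               ⟨[(a.1, a.2), (a.1, !a.2)], ?_, hred' a⟩⟩
        · exact NPath.cons h₁ (NPath.cons (hsym _ _ _ _ h₃) (NPath.nil _))
        · exact NPath.cons h₃ (NPath.cons (hsym _ _ _ _ h₁) (NPath.nil _))
    rcases key p p' hpp h with ⟨hp, hp'⟩ | ⟨hp, hp'⟩
    · subst hp; subst hp'; exact main.1
    · subst hp; subst hp'; exact main.2

/-- Lifting lemma: a path in the folded NFA lifts to a path in `N` whose label word
freely reduces to the original word. -/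
theorem lift_path (hsym : ∀ p q a b, q ∈ N.step p (a, b) → p ∈ N.step q (a, !b))
    (v₁ v₃ : σ)
    (hfold : (∃ v₂ a, v₁ ∈ N.step v₂ a ∧ v₃ ∈ N.step v₂ a) ∨
             (∃ v₂ a, v₂ ∈ N.step v₁ a ∧ v₂ ∈ N.step v₃ a))
    {s t : σ} {w : List (α × Bool)} (hpath : NPath (foldNFA N v₁ v₃) s w t) :
    ∀ p, foldMap v₁ v₃ p = s →
      ∃ q w', foldMap v₁ v₃ q = t ∧ NPath N p w' q ∧ FreeGroup.Red w' w := by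
  induction hpath with
  | nil s =>
    intro p hp
    exact ⟨p, [], hp, NPath.nil p, FreeGroup.Red.refl⟩
  | @cons s t₁ t a w hstep hw ih =>
    intro p hp
    obtain ⟨p', q', hq', hp', hq'₁⟩ := hstep
    obtain ⟨u, hu, hured⟩ := connect N hsym v₁ v₃ hfold p p' (hp.trans hp'.symm)
    obtain ⟨q, w'', hq, hpath'', hred''⟩ := ih q' hq'₁
    refine ⟨q, u ++ a :: w'', hq, hu.append (NPath.cons hq' hpath''), ?_⟩
    have : FreeGroup.Red (u ++ a :: w'') ([] ++ a :: w) :=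
      FreeGroup.Red.append_append hured (FreeGroup.Red.cons_cons hred'')
    simpa using this

end Connect

/-- Folding an NFA does not change the set of free-group reductions of the
accepted language.  Here the NFA is over the alphabet `A ∪ A⁻¹` (letters `(a, b) : α × Bool`)
and has symmetrized edges (every edge has an inverse edge with the inverse label, as in the
loop complexes of the paper).  If `N'` is obtained from `N` by identifying two states
`v₁, v₃` that both receive an edge labeled `a` from the same state `v₂` (or both emit an
edge labeled `a` to the same state `v₂`), then `red(L(N')) = red(L(N))`. -/
theorem stmt2 {α σ : Type*} [DecidableEq α] [DecidableEq σ] (N : NFA (α × Bool) σ)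
    (hsym : ∀ p q a b, q ∈ N.step p (a, b) → p ∈ N.step q (a, !b))
    (v₁ v₃ : σ)
    (hfold : (∃ v₂ a, v₁ ∈ N.step v₂ a ∧ v₃ ∈ N.step v₂ a) ∨
             (∃ v₂ a, v₂ ∈ N.step v₁ a ∧ v₂ ∈ N.step v₃ a)) :
    FreeGroup.reduce '' ((foldNFA N v₁ v₃).accepts : Set (List (α × Bool))) =
      FreeGroup.reduce '' (N.accepts : Set (List (α × Bool))) := by
  apply Set.Subset.antisymm
  · rintro _ ⟨w, hw, rfl⟩
    obtain ⟨p, hp, q, hq, hpath⟩ := mem_accepts_iff.mp hw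
    obtain ⟨p₀, hp₀, rfl⟩ := hp
    obtain ⟨q₀, hq₀, hq₀'⟩ := hq
    obtain ⟨q₁, w', hq₁, hpath', hred⟩ := lift_path N hsym v₁ v₃ hfold hpath p₀ rfl
    obtain ⟨u, hu, hured⟩ := connect N hsym v₁ v₃ hfold q₁ q₀ (hq₁.trans hq₀'.symm)
    refine ⟨w' ++ u, mem_accepts_iff.mpr ⟨p₀, hp₀, q₀, hq₀, hpath'.append hu⟩, ?_⟩
    have : FreeGroup.Red (w' ++ u) (w ++ []) := FreeGroup.Red.append_append hred hured
    rw [List.append_nil] at this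
    exact (FreeGroup.reduce.eq_of_red this)
  · rintro _ ⟨w, hw, rfl⟩
    obtain ⟨p, hp, q, hq, hpath⟩ := mem_accepts_iff.mp hw
    refine ⟨w, mem_accepts_iff.mpr ⟨foldMap v₁ v₃ p, ⟨p, hp, rfl⟩,
      foldMap v₁ v₃ q, ⟨q, hq, rfl⟩, ?_⟩, rfl⟩
    clear hp hq hw
    induction hpath with
    | nil => exact NPath.nil _
    | cons h _ ih => exact NPath.cons ⟨_, _, h, rfl, rfl⟩ ih
end

section
/- For every reduced word u over A ∪ A⁻¹, the set [u]_FG of all words that reduce to u in the free group FG(A) is a context-free language. -/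
set_option linter.unusedSectionVars false
set_option maxHeartbeats 800000

namespace Stmt9

instance {T N : Type} [DecidableEq T] [DecidableEq N] :
    DecidableEq (ContextFreeRule T N) := fun a b =>
  decidable_of_iff (a.input = b.input ∧ a.output = b.output)
    (ContextFreeRule.ext_iff).symm

variable {α : Type} [Fintype α] [DecidableEq α]

abbrev NT (u : List (α × Bool)) : Type := Option (Fin (u.length + 1))

def rEps (u : List (α × Bool)) : ContextFreeRule (α × Bool) (NT u) := ⟨none, []⟩

def rPair (u : List (α × Bool)) (x : α × Bool) : ContextFreeRule (α × Bool) (NT u) :=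
  ⟨none, [.terminal x, .nonterminal none, .terminal (x.1, !x.2), .nonterminal none]⟩

def rStep (u : List (α × Bool)) (i : Fin u.length) : ContextFreeRule (α × Bool) (NT u) :=
  ⟨some i.castSucc, [.nonterminal none, .terminal (u.get i), .nonterminal (some i.succ)]⟩

def rFin (u : List (α × Bool)) : ContextFreeRule (α × Bool) (NT u) :=
  ⟨some (Fin.last u.length), [.nonterminal none]⟩

abbrev G (u : List (α × Bool)) : ContextFreeGrammar (α × Bool) :=
  ⟨NT u, some 0,
    insert (rEps u) (insert (rFin u)
      ((Finset.univ.image (rPair u)) ∪ (Finset.univ.image (rStep u))))⟩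

lemma rEps_mem (u : List (α × Bool)) : rEps u ∈ (G u).rules := by simp [G]
lemma rFin_mem (u : List (α × Bool)) : rFin u ∈ (G u).rules := by simp [G]
lemma rPair_mem (u : List (α × Bool)) (x : α × Bool) : rPair u x ∈ (G u).rules := by
  simp only [G, Finset.mem_insert, Finset.mem_union, Finset.mem_image, Finset.mem_univ, true_and]
  exact Or.inr (Or.inr (Or.inl ⟨x, rfl⟩))
lemma rStep_mem (u : List (α × Bool)) (i : Fin u.length) : rStep u i ∈ (G u).rules := by
  simp only [G, Finset.mem_insert, Finset.mem_union, Finset.mem_image, Finset.mem_univ, true_and]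
  exact Or.inr (Or.inr (Or.inr ⟨i, rfl⟩))

lemma reduce_eq_nil_iff {w : List (α × Bool)} :
    FreeGroup.reduce w = [] ↔ FreeGroup.mk w = 1 := by
  constructor
  · intro h
    rw [FreeGroup.one_eq_mk]
    exact FreeGroup.reduce.exact (by simp [h])
  · intro h
    have := FreeGroup.toWord_mk (L₁ := w)
    rw [h, FreeGroup.toWord_one] at this
    exact this.symm

lemma mk_pair (x : α × Bool) : FreeGroup.mk [x, (x.1, !x.2)] = 1 := by
  rw [FreeGroup.one_eq_mk]
  apply FreeGroup.reduce.exact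
  simp [FreeGroup.reduce]

lemma split : ∀ (n : ℕ) (w : List (α × Bool)), w.length ≤ n → ∀ a s,
    FreeGroup.reduce w = a :: s →
    ∃ w1 w2, w = w1 ++ a :: w2 ∧ FreeGroup.reduce w1 = [] ∧ FreeGroup.reduce w2 = s := by
  intro n
  induction n with
  | zero =>
    intro w hw a s h
    match w with
    | [] => simp at h
  | succ n ih =>
    intro w hw a s h
    match w with
    | [] => simp at h
    | y :: t =>
      rw [FreeGroup.reduce.cons] at h
      cases ht : FreeGroup.reduce t with
      | nil =>
        rw [ht] at h
        simp only [List.cons.injEq] at h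
        obtain ⟨rfl, rfl⟩ := h
        exact ⟨[], t, rfl, rfl, ht⟩
      | cons hd tl =>
        rw [ht] at h
        dsimp only at h
        by_cases hc : y.1 = hd.1 ∧ y.2 = !hd.2
        · rw [if_pos hc] at h
          subst h
          have hwlen : t.length ≤ n := by simpa using Nat.le_of_succ_le_succ hw
          obtain ⟨t1, t2, rfl, h1, h2⟩ := ih t hwlen hd (a :: s) ht
          have ht2len : t2.length ≤ n := by
            have := hwlen; simp at this; omega
          obtain ⟨w1, w2, rfl, h3, h4⟩ := ih t2 ht2len a s h2
          refine ⟨y :: t1 ++ hd :: w1, w2, by simp, ?_, h4⟩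
          rw [reduce_eq_nil_iff]
          have he : (y :: t1 ++ hd :: w1) = [y] ++ t1 ++ ([hd] ++ w1) := by simp
          rw [he, ← FreeGroup.mul_mk, ← FreeGroup.mul_mk, ← FreeGroup.mul_mk,
            reduce_eq_nil_iff.mp h1, reduce_eq_nil_iff.mp h3]
          have hhd : hd = (y.1, !y.2) := by
            obtain ⟨hc1, hc2⟩ := hc
            cases hd; cases y; simp_all
          rw [hhd]
          simpa [FreeGroup.mul_mk] using mk_pair y
        · rw [if_neg hc] at h
          simp only [List.cons.injEq] at h
          obtain ⟨rfl, rfl⟩ := h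
          exact ⟨[], t, rfl, rfl, ht⟩


def psi (u : List (α × Bool)) : Symbol (α × Bool) (NT u) → FreeGroup α
  | .terminal x => FreeGroup.mk [x]
  | .nonterminal none => 1
  | .nonterminal (some i) => FreeGroup.mk (u.drop i)

def phi (u : List (α × Bool)) (l : List (Symbol (α × Bool) (NT u))) : FreeGroup α :=
  (l.map (psi u)).prod

lemma phi_append (u : List (α × Bool)) (l₁ l₂ : List (Symbol (α × Bool) (NT u))) :
    phi u (l₁ ++ l₂) = phi u l₁ * phi u l₂ := by
  simp [phi]

lemma rule_sound (u : List (α × Bool)) (r : ContextFreeRule (α × Bool) (NT u))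
    (hr : r ∈ (G u).rules) : phi u r.output = psi u (.nonterminal r.input) := by
  simp only [G, Finset.mem_insert, Finset.mem_union, Finset.mem_image, Finset.mem_univ,
    true_and] at hr
  rcases hr with rfl | rfl | ⟨x, rfl⟩ | ⟨i, rfl⟩
  · simp [phi, psi, rEps]
  · simp [phi, psi, rFin, List.drop_length, FreeGroup.one_eq_mk, Fin.val_last]
  · simp only [phi, psi, rPair, List.map_cons, List.map_nil, List.prod_cons, List.prod_nil,
      mul_one, one_mul]
    simpa [FreeGroup.mul_mk] using mk_pair x
  · simp only [phi, psi, rStep, List.map_cons, List.map_nil, List.prod_cons, List.prod_nil,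
      mul_one, one_mul, Fin.coe_castSucc, Fin.val_succ]
    rw [FreeGroup.mul_mk]
    congr 1
    rw [List.drop_eq_getElem_cons i.isLt]
    simp

lemma derives_phi {u : List (α × Bool)} {v w : List (Symbol (α × Bool) (NT u))}
    (h : (G u).Derives v w) : phi u v = phi u w := by
  induction h with
  | refl => rfl
  | tail _ last ih =>
    obtain ⟨r, hr, hrw⟩ := last
    obtain ⟨p, q, rfl, rfl⟩ := hrw.exists_parts
    rw [ih, phi_append, phi_append, phi_append, phi_append, rule_sound u r hr]
    simp [phi]

lemma mk_prod (w : List (α × Bool)) :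
    (w.map fun x => FreeGroup.mk [x]).prod = FreeGroup.mk w := by
  induction w with
  | nil => simp [FreeGroup.one_eq_mk]
  | cons y t ih => simp [ih, FreeGroup.mul_mk]

lemma derT (u : List (α × Bool)) : ∀ (m : ℕ) (w : List (α × Bool)), w.length ≤ m →
    FreeGroup.reduce w = [] →
    (G u).Derives [.nonterminal none] (w.map .terminal) := by
  intro m
  induction m with
  | zero =>
    intro w hw _
    match w with
    | [] =>
      refine (ContextFreeGrammar.Produces.single ⟨rEps u, rEps_mem u, ?_⟩)
      simpa [rEps] using (ContextFreeRule.Rewrites.input_output (r := rEps u))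
  | succ m ih =>
    intro w hw h
    match w with
    | [] =>
      refine (ContextFreeGrammar.Produces.single ⟨rEps u, rEps_mem u, ?_⟩)
      simpa [rEps] using (ContextFreeRule.Rewrites.input_output (r := rEps u))
    | y :: t =>
      have ht : FreeGroup.reduce t = [(y.1, !y.2)] := by
        rw [FreeGroup.reduce.cons] at h
        cases ht' : FreeGroup.reduce t with
        | nil => rw [ht'] at h; simp at h
        | cons hd tl =>
          rw [ht'] at h
          dsimp only at h
          by_cases hc : y.1 = hd.1 ∧ y.2 = !hd.2
          · rw [if_pos hc] at h
            subst h
            have hhd : hd = (y.1, !y.2) := by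
              obtain ⟨hc1, hc2⟩ := hc
              cases hd; cases y; simp_all
            rw [hhd]
          · rw [if_neg hc] at h; simp at h
      obtain ⟨t1, t2, rfl, h1, h2⟩ := split t.length t le_rfl (y.1, !y.2) [] ht
      have hlen : t1.length ≤ m ∧ t2.length ≤ m := by
        simp at hw; omega
      have D1 := ih t1 hlen.1 h1
      have D2 := ih t2 hlen.2 h2
      have p1 : (G u).Produces [.nonterminal none]
          ([.terminal y, .nonterminal none, .terminal (y.1, !y.2), .nonterminal none] :
            List (Symbol (α × Bool) (NT u))) := by
        refine ⟨rPair u y, rPair_mem u y, ?_⟩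
        simpa [rPair] using (ContextFreeRule.Rewrites.input_output (r := rPair u y))
      have s1 : (G u).Derives
          ([.terminal y] ++ [.nonterminal none] ++ ([.terminal (y.1, !y.2), .nonterminal none]))
          ([.terminal y] ++ t1.map .terminal ++ ([.terminal (y.1, !y.2), .nonterminal none])) :=
        (D1.append_left _).append_right _
      have s2 : (G u).Derives
          (([.terminal y] ++ t1.map .terminal ++ [.terminal (y.1, !y.2)]) ++ [.nonterminal none])
          (([.terminal y] ++ t1.map .terminal ++ [.terminal (y.1, !y.2)]) ++ t2.map .terminal) :=
        D2.append_left _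
      refine p1.trans_derives (s1.trans ?_)
      simpa using s2

lemma derChain (u : List (α × Bool)) : ∀ (k i : ℕ) (hik : i + k = u.length)
    (w : List (α × Bool)), FreeGroup.reduce w = u.drop i →
    (G u).Derives [.nonterminal (some ⟨i, by omega⟩)] (w.map .terminal) := by
  intro k
  induction k with
  | zero =>
    intro i hik w hw
    have hi : i = u.length := by omega
    subst hi
    rw [List.drop_length] at hw
    have p1 : (G u).Produces [.nonterminal (some ⟨u.length, by omega⟩)]
        ([.nonterminal none] : List (Symbol (α × Bool) (NT u))) := by
      refine ⟨rFin u, rFin_mem u, ?_⟩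
      simpa [rFin, Fin.last] using (ContextFreeRule.Rewrites.input_output (r := rFin u))
    exact p1.trans_derives (derT u w.length w le_rfl hw)
  | succ k ih =>
    intro i hik w hw
    have hi : i < u.length := by omega
    rw [List.drop_eq_getElem_cons hi] at hw
    obtain ⟨w1, w2, rfl, h1, h2⟩ := split w.length w le_rfl _ _ hw
    have D1 := derT u w1.length w1 le_rfl h1
    have D2 := ih (i + 1) (by omega) w2 h2
    have p1 : (G u).Produces [.nonterminal (some ⟨i, by omega⟩)]
        ([.nonterminal none, .terminal (u.get ⟨i, hi⟩), .nonterminal (some ⟨i + 1, by omega⟩)] :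
          List (Symbol (α × Bool) (NT u))) := by
      refine ⟨rStep u ⟨i, hi⟩, rStep_mem u ⟨i, hi⟩, ?_⟩
      simpa [rStep, Fin.castSucc, Fin.succ] using
        (ContextFreeRule.Rewrites.input_output (r := rStep u ⟨i, hi⟩))
    have s1 : (G u).Derives
        ([.nonterminal none] ++ [.terminal (u.get ⟨i, hi⟩), .nonterminal (some ⟨i + 1, by omega⟩)])
        (w1.map .terminal ++ [.terminal (u.get ⟨i, hi⟩), .nonterminal (some ⟨i + 1, by omega⟩)]) :=
      D1.append_right _
    have s2 : (G u).Derives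
        ((w1.map .terminal ++ [.terminal (u.get ⟨i, hi⟩)]) ++ [.nonterminal (some ⟨i + 1, by omega⟩)])
        ((w1.map .terminal ++ [.terminal (u.get ⟨i, hi⟩)]) ++ w2.map .terminal) :=
      D2.append_left _
    refine p1.trans_derives (s1.trans ?_)
    simpa using s2

end Stmt9

/-- For every reduced word `u` over `A ∪ A⁻¹`, the set `[u]_FG` of all words
that reduce to `u` in the free group `FG(A)` is a context-free language. -/
theorem stmt9 {α : Type} [Fintype α] [DecidableEq α] (u : List (α × Bool))
    (hu : FreeGroup.reduce u = u) :
    Language.IsContextFree {w : List (α × Bool) | FreeGroup.reduce w = u} := by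
  refine ⟨Stmt9.G u, ?_⟩
  ext w
  simp only [ContextFreeGrammar.mem_language_iff, Set.mem_setOf_eq]
  constructor
  · intro h
    have hphi := Stmt9.derives_phi h
    have h1 : Stmt9.phi u [Symbol.nonterminal (Stmt9.G u).initial] = FreeGroup.mk u := by
      simp [Stmt9.phi, Stmt9.psi, Stmt9.G]
    have h2 : Stmt9.phi u (w.map .terminal) = FreeGroup.mk w := by
      rw [Stmt9.phi, List.map_map]
      exact Stmt9.mk_prod w
    rw [h1, h2] at hphi
    show FreeGroup.reduce w = u
    rw [FreeGroup.reduce.sound hphi.symm, hu]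
  · intro h
    have := Stmt9.derChain u u.length 0 (by omega) w (by simpa using (show FreeGroup.reduce w = u from h))
    exact this
end

section
/- If a finite presentation ⟨A;R⟩ has isodiametric function D, then for any n, a word w of length ≤ n satisfies w =_{⟨A;R⟩} 1 if and only if some word freely equal to w is accepted by the loop-NFA Λ_{D(n)}, i.e., [w]_FG ∩ L(Λ_{D(n)}) ≠ ∅. -/
/-- `w` represents the identity of the group presented by `⟨A;R⟩` (with relators given as
words): its image in the free group lies in the normal closure of the relators. -/
def WordTrivial {α : Type*} (R : Set (List (α × Bool))) (w : List (α × Bool)) : Prop :=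
  FreeGroup.mk w ∈ Subgroup.normalClosure (FreeGroup.mk '' R)

/-- The language `L(Λ_j)` of the loop-NFA `Λ_j` of the presentation: the words accepted by
`Λ_j` are exactly the literal concatenations of blocks `x⁻¹ r x` with `r ∈ R ∪ R⁻¹` and
`x` a reduced word of length `≤ j` (each block traverses the path labeled `x` from the
origin, goes around the loop labeled `r`, and returns). -/
def loopLang {α : Type*} [DecidableEq α] (R : Set (List (α × Bool))) (j : ℕ) :
    Language (α × Bool) :=
  {z | ∃ L : List (List (α × Bool) × List (α × Bool)),
    (∀ p ∈ L, (p.1 ∈ R ∨ FreeGroup.invRev p.1 ∈ R) ∧ p.2.length ≤ j ∧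
      FreeGroup.reduce p.2 = p.2) ∧
    z = (L.map fun p => FreeGroup.invRev p.2 ++ p.1 ++ p.2).flatten}

lemma flatten_mk_eq_prod {α : Type} [DecidableEq α]
    (L : List (List (α × Bool) × List (α × Bool))) :
    FreeGroup.mk (L.map fun p => FreeGroup.invRev p.2 ++ p.1 ++ p.2).flatten
      = (L.map fun p =>
          (FreeGroup.mk p.2)⁻¹ * FreeGroup.mk p.1 * FreeGroup.mk p.2).prod := by
  induction L with
  | nil => rfl
  | cons a L ih =>
    simp only [List.map_cons, List.flatten_cons, List.prod_cons, ← FreeGroup.mul_mk, ih,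
      FreeGroup.inv_mk, mul_assoc]

/-- If a finite presentation `⟨A;R⟩` has isodiametric function `D`, then for
any `n`, a word `w` of length `≤ n` satisfies `w =_{⟨A;R⟩} 1` if and only if some word
freely equal to `w` is accepted by the loop-NFA `Λ_{D(n)}`, i.e.
`[w]_FG ∩ L(Λ_{D(n)}) ≠ ∅`. -/
theorem stmt12 {α : Type} [Fintype α] [DecidableEq α]
    (R : Finset (List (α × Bool))) (hR : ∀ r ∈ R, r ≠ []) (D : ℕ → ℕ)
    (hD : ∀ (n : ℕ) (w : List (α × Bool)), w.length ≤ n →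
      WordTrivial (↑R) w →
      ∃ L : List (List (α × Bool) × List (α × Bool)),
        (∀ p ∈ L, (p.1 ∈ R ∨ FreeGroup.invRev p.1 ∈ R) ∧ p.2.length ≤ D n) ∧
        FreeGroup.mk w = (L.map fun p =>
          (FreeGroup.mk p.2)⁻¹ * FreeGroup.mk p.1 * FreeGroup.mk p.2).prod) :
    ∀ (n : ℕ) (w : List (α × Bool)), w.length ≤ n →
      (WordTrivial (↑R) w ↔
        ∃ z ∈ loopLang (↑R) (D n), FreeGroup.reduce z = FreeGroup.reduce w) := by
  intro n w hw
  constructor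
  · intro htriv
    obtain ⟨L, hL, hprod⟩ := hD n w hw htriv
    set L' : List (List (α × Bool) × List (α × Bool)) :=
      L.map fun p => (p.1, FreeGroup.reduce p.2) with hL'
    refine ⟨(L'.map fun p => FreeGroup.invRev p.2 ++ p.1 ++ p.2).flatten,
      ⟨L', ?_, rfl⟩, ?_⟩
    · intro p hp
      simp only [hL', List.mem_map] at hp
      obtain ⟨q, hq, rfl⟩ := hp
      obtain ⟨h1, h2⟩ := hL q hq
      exact ⟨h1, le_trans (FreeGroup.Red.length_le FreeGroup.reduce.red) h2,
        FreeGroup.reduce.idem⟩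
    · apply FreeGroup.reduce.sound
      rw [flatten_mk_eq_prod, hprod, hL', List.map_map]
      congr 1
      apply List.map_congr_left
      intro p _
      simp [Function.comp, FreeGroup.reduce.self]
  · rintro ⟨z, ⟨L, hL, rfl⟩, hred⟩
    unfold WordTrivial
    rw [(FreeGroup.reduce.exact hred).symm, flatten_mk_eq_prod]
    apply list_prod_mem
    intro x hx
    simp only [List.mem_map] at hx
    obtain ⟨p, hp, rfl⟩ := hx
    obtain ⟨h1, -⟩ := hL p hp
    have hgen : FreeGroup.mk p.1 ∈ Subgroup.normalClosure
        (FreeGroup.mk '' (R : Set (List (α × Bool)))) := by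
      rcases h1 with h | h
      · exact Subgroup.subset_normalClosure ⟨p.1, h, rfl⟩
      · have he : (FreeGroup.mk (FreeGroup.invRev p.1))⁻¹ = FreeGroup.mk p.1 := by
          rw [FreeGroup.inv_mk, FreeGroup.invRev_invRev]
        rw [← he]
        exact Subgroup.inv_mem _ (Subgroup.subset_normalClosure ⟨_, h, rfl⟩)
    exact (Subgroup.normalClosure_normal).conj_mem' _ hgen _
end

section
/- Suppose ⟨A;R⟩ has isodiametric function D and ℓ : ℕ → ℕ is such that for every word w of length ≤ n with w =_{⟨A;R⟩} 1, the set [w]_FG ∩ L(Λ_{D(n)}) contains a word of length ≤ ℓ(n). Then the minimal isoperimetric function P_min of ⟨A;R⟩ satisfies P_min(n) ≤ ℓ(n). -/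
lemma mk_flatten_blocks {α : Type} [DecidableEq α]
    (L : List (List (α × Bool) × List (α × Bool))) :
    FreeGroup.mk ((L.map fun p => FreeGroup.invRev p.2 ++ p.1 ++ p.2).flatten) =
      (L.map fun p =>
          (FreeGroup.mk p.2)⁻¹ * FreeGroup.mk p.1 * FreeGroup.mk p.2).prod := by
  induction L with
  | nil => rfl
  | cons a L ih =>
      rw [List.map_cons, List.flatten_cons, List.map_cons, List.prod_cons, ← ih,
        FreeGroup.inv_mk, FreeGroup.mul_mk, FreeGroup.mul_mk, FreeGroup.mul_mk]

/-- Suppose `⟨A;R⟩` has isodiametric function `D` and `ℓ : ℕ → ℕ` is such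
that for every word `w` of length `≤ n` with `w =_{⟨A;R⟩} 1`, the set
`[w]_FG ∩ L(Λ_{D(n)})` contains a word of length `≤ ℓ(n)`.  Then the minimal isoperimetric
function `P_min` of `⟨A;R⟩` satisfies `P_min(n) ≤ ℓ(n)`: every trivial word of length
`≤ n` is equal in `FG(A)` to a product of at most `ℓ(n)` conjugates of relators. -/
theorem stmt13 {α : Type} [Fintype α] [DecidableEq α]
    (R : Finset (List (α × Bool))) (hR : ∀ r ∈ R, r ≠ []) (D ℓ : ℕ → ℕ)
    (hD : ∀ (n : ℕ) (w : List (α × Bool)), w.length ≤ n →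
      WordTrivial (↑R) w →
      ∃ L : List (List (α × Bool) × List (α × Bool)),
        (∀ p ∈ L, (p.1 ∈ R ∨ FreeGroup.invRev p.1 ∈ R) ∧ p.2.length ≤ D n) ∧
        FreeGroup.mk w = (L.map fun p =>
          (FreeGroup.mk p.2)⁻¹ * FreeGroup.mk p.1 * FreeGroup.mk p.2).prod)
    (hℓ : ∀ (n : ℕ) (w : List (α × Bool)), w.length ≤ n →
      WordTrivial (↑R) w →
      ∃ z ∈ loopLang (↑R) (D n),
        FreeGroup.reduce z = FreeGroup.reduce w ∧ z.length ≤ ℓ n) :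
    ∀ (n : ℕ) (w : List (α × Bool)), w.length ≤ n →
      WordTrivial (↑R) w →
      ∃ L : List (List (α × Bool) × List (α × Bool)),
        (∀ p ∈ L, p.1 ∈ R ∨ FreeGroup.invRev p.1 ∈ R) ∧
        L.length ≤ ℓ n ∧
        FreeGroup.mk w = (L.map fun p =>
          (FreeGroup.mk p.2)⁻¹ * FreeGroup.mk p.1 * FreeGroup.mk p.2).prod := by
  intro n w hw hwt
  obtain ⟨z, ⟨L, hL, hz⟩, hred, hlen⟩ := hℓ n w hw hwt
  refine ⟨L, fun p hp => (hL p hp).1, ?_, ?_⟩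
  · -- each block is nonempty, so L.length ≤ z.length ≤ ℓ n
    refine le_trans ?_ hlen
    subst hz
    rw [List.length_flatten, List.map_map]
    calc L.length = (L.map fun _ => 1).sum := by simp
      _ ≤ _ := by
          apply List.sum_le_sum
          intro p hp
          have h1 : p.1 ≠ [] := by
            rcases (hL p hp).1 with h | h
            · exact hR _ h
            · intro he; exact hR _ h (by simp [he, FreeGroup.invRev])
          simp only [Function.comp_apply, List.length_append]
          have : 0 < p.1.length := List.length_pos_iff.mpr h1
          omega
  · -- mk w = mk z = product of conjugates
    have : FreeGroup.mk w = FreeGroup.mk z := by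
      have h1 := FreeGroup.mk_toWord (x := FreeGroup.mk w)
      have h2 := FreeGroup.mk_toWord (x := FreeGroup.mk z)
      rw [FreeGroup.toWord_mk] at h1 h2
      rw [← h1, ← h2, hred]
    rw [this, hz, mk_flatten_blocks]
end
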